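/- arXiv:2308.16262 — 6 statements merged into one kernel-verified Lean document; each statement's English description precedes it below -/
import Mathlib

section
/- Let 𝓔 ∈ ℝ^{m×d}, θ* ∈ ℝ^m with 𝓔𝓔ᵀθ* ≠ 0, γ > 0, k > 0, and suppose α = (k − γ)𝓔𝓔ᵀθ*. Define Q(θ) = ⟨α, θ⟩ + β + γ⟨θ, 𝓔𝓔ᵀθ*⟩ and cPI(θ) = γ⟨θ, 𝓔𝓔ᵀθ*⟩. Then θ^{AO} := (α + γ𝓔𝓔ᵀθ*)/‖α + γ𝓔𝓔ᵀθ*‖₂ equals 𝓔𝓔ᵀθ*/‖𝓔𝓔ᵀθ*‖₂, and θ^{AO} simultaneously maximises Q and cPI over the unit ball: for every θ with ‖θ‖₂ ≤ 1, Q(θ) ≤ Q(θ^{AO}) and cPI(θ) ≤ cPI(θ^{AO}). -/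
open scoped RealInnerProductSpace BigOperators
open Matrix

/-- Corollary 3.2 (Maximum improvement): if `α = (k − γ) 𝓔𝓔ᵀθ*` with `k, γ > 0`, then
`θ^AO = (α + γ𝓔𝓔ᵀθ*)/‖·‖ = 𝓔𝓔ᵀθ*/‖𝓔𝓔ᵀθ*‖` maximises both `Q` and `cPI` over the unit ball. -/
theorem max_improvement
    (m d : ℕ) (E : Matrix (Fin m) (Fin d) ℝ)
    (θstar : EuclideanSpace ℝ (Fin m))
    (hw : Matrix.toEuclideanLin (E * Eᵀ) θstar ≠ 0)
    (γ k β : ℝ) (hγ : 0 < γ) (hk : 0 < k)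
    (α : EuclideanSpace ℝ (Fin m))
    (hα : α = (k - γ) • Matrix.toEuclideanLin (E * Eᵀ) θstar)
    (Q cPI : EuclideanSpace ℝ (Fin m) → ℝ)
    (hQ : ∀ θ, Q θ = ⟪α, θ⟫ + β + γ * ⟪θ, Matrix.toEuclideanLin (E * Eᵀ) θstar⟫)
    (hcPI : ∀ θ, cPI θ = γ * ⟪θ, Matrix.toEuclideanLin (E * Eᵀ) θstar⟫)
    (θAO : EuclideanSpace ℝ (Fin m))
    (hθAO : θAO = ‖α + γ • Matrix.toEuclideanLin (E * Eᵀ) θstar‖⁻¹ •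
        (α + γ • Matrix.toEuclideanLin (E * Eᵀ) θstar)) :
    θAO = ‖Matrix.toEuclideanLin (E * Eᵀ) θstar‖⁻¹ • Matrix.toEuclideanLin (E * Eᵀ) θstar ∧
      ∀ θ : EuclideanSpace ℝ (Fin m), ‖θ‖ ≤ 1 → Q θ ≤ Q θAO ∧ cPI θ ≤ cPI θAO := by
  set w := Matrix.toEuclideanLin (E * Eᵀ) θstar with hwdef
  have hsum : α + γ • w = k • w := by
    rw [hα]; rw [← add_smul]; ring_nf
  have hwnorm : (0:ℝ) < ‖w‖ := norm_pos_iff.mpr hw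
  have hAO : θAO = ‖w‖⁻¹ • w := by
    rw [hθAO, hsum, norm_smul, smul_smul, Real.norm_eq_abs, abs_of_pos hk,
      mul_inv, mul_assoc, mul_comm k⁻¹, mul_assoc, mul_inv_cancel₀ hk.ne', mul_one]
  refine ⟨hAO, fun θ hθ => ?_⟩
  have hmax : ⟪θ, w⟫ ≤ ⟪θAO, w⟫ := by
    have h1 : ⟪θ, w⟫ ≤ ‖w‖ := by
      calc ⟪θ, w⟫ ≤ ‖θ‖ * ‖w‖ := real_inner_le_norm θ w
        _ ≤ 1 * ‖w‖ := by gcongr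
        _ = ‖w‖ := one_mul _
    have h2 : ⟪θAO, w⟫ = ‖w‖ := by
      rw [hAO, real_inner_smul_left, real_inner_self_eq_norm_sq]
      field_simp
    linarith
  have hαi : ∀ θ', ⟪α, θ'⟫ = (k - γ) * ⟪θ', w⟫ := by
    intro θ'
    rw [hα, real_inner_smul_left, real_inner_comm]
  constructor
  · rw [hQ, hQ, hαi, hαi]
    have : (k - γ) * ⟪θ, w⟫ + γ * ⟪θ, w⟫ ≤ (k - γ) * ⟪θAO, w⟫ + γ * ⟪θAO, w⟫ := by
      have h := mul_le_mul_of_nonneg_left hmax hk.le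
      nlinarith
    linarith
  · rw [hcPI, hcPI]
    exact mul_le_mul_of_nonneg_left hmax hγ.le
end

section
/- Let σ > 0, L > 0, γ > 0, 𝓔 ∈ ℝ^{m×d}, and θ* ∈ ℝ^m with ‖θ*‖₂ ≤ 1 and 𝓔𝓔ᵀθ* ≠ 0. Set θ^{AO} := 𝓔𝓔ᵀθ*/‖𝓔𝓔ᵀθ*‖₂ and assume θ^{AO} ≠ θ*. Let δ̃ : ℝ → ℝ be monotone nondecreasing and L-Lipschitz, define the prediction ŷ(θ; b) := ⟨b + γ𝓔𝓔ᵀθ, θ⟩ and the admission chance ξ_θ(b) := δ̃(ŷ(θ; b)), and let λ := γ(⟨θ^{AO}, 𝓔𝓔ᵀθ^{AO}⟩ − ⟨θ*, 𝓔𝓔ᵀθ*⟩). Let μ be the product probability measure on ℝ^m whose coordinates are i.i.d. real Gaussian N(0, σ²) (so the baseline B ~ N(0, σ²I)). Then for every M > 0, μ{ b ∈ ℝ^m : ξ_{θ*}(b) − ξ_{θ^{AO}}(b) > M } ≤ Φ( (−M/L − λ) / (σ‖θ^{AO} − θ*‖₂) ), where Φ is the cumulative distribution function of the standard real Gaussian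 measure N(0,1). -/
open scoped RealInnerProductSpace BigOperators ENNReal
open Matrix MeasureTheory ProbabilityTheory
open scoped NNReal

open Real in
private lemma exp_arg_identity (a b x y m1 m2 : ℝ) (ha : a ≠ 0) (hb : b ≠ 0) (hab : a + b ≠ 0) :
    -(x - m1)^2/(2*a) + -(y - x - m2)^2/(2*b)
      = -(y-m1-m2)^2/(2*(a+b)) + -((a+b)/(2*a*b)) * (x - (m1 + a*(y-m1-m2)/(a+b)))^2 := by
  field_simp
  ring

open Real in
private lemma gauss_pdf_conv (m1 m2 : ℝ) (V1 V2 : ℝ≥0) (hV1 : V1 ≠ 0) (hV2 : V2 ≠ 0) (y : ℝ) :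
    ∫ x, gaussianPDFReal m1 V1 x * gaussianPDFReal m2 V2 (y - x)
      = gaussianPDFReal (m1 + m2) (V1 + V2) y := by
  have hv1 : (0:ℝ) < V1 := lt_of_le_of_ne V1.coe_nonneg (by exact_mod_cast (Ne.symm hV1))
  have hv2 : (0:ℝ) < V2 := lt_of_le_of_ne V2.coe_nonneg (by exact_mod_cast (Ne.symm hV2))
  have h1 : (V1:ℝ) ≠ 0 := ne_of_gt hv1
  have h2 : (V2:ℝ) ≠ 0 := ne_of_gt hv2
  have h12 : (V1:ℝ) + (V2:ℝ) ≠ 0 := by positivity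
  have hB_pos : (0:ℝ) < ((V1:ℝ) + V2) / (2 * V1 * V2) := by positivity
  have key : ∀ x : ℝ, gaussianPDFReal m1 V1 x * gaussianPDFReal m2 V2 (y - x)
      = ((√(2 * π * V1))⁻¹ * (√(2 * π * V2))⁻¹ * rexp (-(y-m1-m2)^2 / (2 * ((V1:ℝ) + V2))))
        * rexp (-(((V1:ℝ) + V2) / (2 * V1 * V2))
            * (x - (m1 + (V1:ℝ)*(y-m1-m2)/((V1:ℝ)+V2)))^2) := by
    intro x
    simp only [gaussianPDFReal]
    rw [mul_mul_mul_comm, ← Real.exp_add,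
      mul_assoc ((√(2 * π * (V1:ℝ)))⁻¹ * (√(2 * π * (V2:ℝ)))⁻¹), ← Real.exp_add]
    congr 2
    exact exp_arg_identity _ _ _ _ _ _ h1 h2 h12
  rw [integral_congr_ae (Filter.Eventually.of_forall key), integral_const_mul,
    integral_sub_right_eq_self
      (fun u : ℝ => rexp (-(((V1:ℝ) + V2) / (2 * V1 * V2)) * u^2))
      (m1 + (V1:ℝ)*(y-m1-m2)/((V1:ℝ)+V2)),
    integral_gaussian]
  simp only [gaussianPDFReal, NNReal.coe_add]
  have hconst : (√(2 * π * V1))⁻¹ * (√(2 * π * V2))⁻¹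
        * √(π / (((V1:ℝ) + V2) / (2 * V1 * V2)))
      = (√(2 * π * ((V1:ℝ) + V2)))⁻¹ := by
    rw [show ((√(2 * π * (V1:ℝ)))⁻¹ : ℝ) = √((2 * π * (V1:ℝ))⁻¹) by rw [Real.sqrt_inv],
        show ((√(2 * π * (V2:ℝ)))⁻¹ : ℝ) = √((2 * π * (V2:ℝ))⁻¹) by rw [Real.sqrt_inv],
        ← Real.sqrt_inv, ← Real.sqrt_mul (by positivity), ← Real.sqrt_mul (by positivity)]
    congr 1
    rw [div_div_eq_mul_div]
    field_simp
  calc (√(2 * π * V1))⁻¹ * (√(2 * π * V2))⁻¹ * rexp (-(y-m1-m2)^2 / (2 * ((V1:ℝ) + V2)))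
        * √(π / (((V1:ℝ) + V2) / (2 * V1 * V2)))
      = ((√(2 * π * V1))⁻¹ * (√(2 * π * V2))⁻¹ * √(π / (((V1:ℝ) + V2) / (2 * V1 * V2))))
          * rexp (-(y-m1-m2)^2 / (2 * ((V1:ℝ) + V2))) := by ring
    _ = (√(2 * π * ((V1:ℝ) + V2)))⁻¹ * rexp (-(y - (m1 + m2))^2 / (2 * ((V1:ℝ) + V2))) := by
        rw [hconst]; ring_nf

open Real in
private lemma gauss_map_add (m1 m2 : ℝ) (V1 V2 : ℝ≥0) :
    Measure.map (fun p : ℝ × ℝ => p.1 + p.2) ((gaussianReal m1 V1).prod (gaussianReal m2 V2))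
      = gaussianReal (m1 + m2) (V1 + V2) := by
  by_cases hV1 : V1 = 0
  · subst hV1
    rw [gaussianReal_zero_var, Measure.dirac_prod,
      Measure.map_map (by fun_prop) (by fun_prop)]
    have : ((fun p : ℝ × ℝ => p.1 + p.2) ∘ Prod.mk m1) = (fun y => m1 + y) := rfl
    rw [this, gaussianReal_map_const_add]
    rw [add_comm m2 m1, zero_add]
  by_cases hV2 : V2 = 0
  · subst hV2
    rw [gaussianReal_zero_var, Measure.prod_dirac,
      Measure.map_map (by fun_prop) (by fun_prop)]
    have : ((fun p : ℝ × ℝ => p.1 + p.2) ∘ (fun x => (x, m2))) = (fun x => x + m2) := rfl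
    rw [this, gaussianReal_map_add_const, add_zero]
  -- main case
  have hV12 : V1 + V2 ≠ 0 := fun h => hV1 (by simpa using (add_eq_zero.mp h).1)
  refine Measure.ext fun s hs => ?_
  rw [Measure.map_apply (by fun_prop) hs,
    Measure.prod_apply ((by fun_prop : Measurable fun p : ℝ × ℝ => p.1 + p.2) hs)]
  have hslice : ∀ x : ℝ, (gaussianReal m2 V2) (Prod.mk x ⁻¹' ((fun p : ℝ × ℝ => p.1 + p.2) ⁻¹' s))
      = ∫⁻ y in s, ENNReal.ofReal (gaussianPDFReal (m2 + x) V2 y) := by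
    intro x
    have h1 : (Prod.mk x ⁻¹' ((fun p : ℝ × ℝ => p.1 + p.2) ⁻¹' s)) = (fun y => x + y) ⁻¹' s := rfl
    rw [h1, ← Measure.map_apply (by fun_prop) hs, gaussianReal_map_const_add,
      gaussianReal_apply_eq_integral _ hV2,
      ofReal_integral_eq_lintegral_ofReal ((integrable_gaussianPDFReal _ _).restrict)
        (ae_of_all _ fun z => gaussianPDFReal_nonneg _ _ _)]
  simp_rw [hslice]
  rw [gaussianReal_of_var_ne_zero _ hV1,
    lintegral_withDensity_eq_lintegral_mul _ (measurable_gaussianPDF _ _)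
      (Measurable.lintegral_prod_right (by
        unfold gaussianPDFReal
        fun_prop))]
  simp only [Pi.mul_apply]
  rw [lintegral_congr fun x => (lintegral_const_mul (gaussianPDF m1 V1 x)
    ((measurable_gaussianPDFReal _ _).ennreal_ofReal)).symm]
  rw [lintegral_lintegral_swap (by
    unfold gaussianPDF gaussianPDFReal
    fun_prop)]
  rw [gaussianReal_apply _ hV12, gaussianPDF_def]
  refine setLIntegral_congr_fun hs (fun y _ => ?_)
  have hint : Integrable (fun x => gaussianPDFReal m1 V1 x * gaussianPDFReal m2 V2 (y - x)) := by
    refine ((integrable_gaussianPDFReal m1 V1).bdd_mul (c := (√(2 * Real.pi * V2))⁻¹)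
      (((measurable_gaussianPDFReal m2 V2).comp
        (measurable_const.sub measurable_id)).aestronglyMeasurable)
      (ae_of_all _ fun x => ?_)).congr (ae_of_all _ fun x => mul_comm _ _)
    simp only [Function.comp_apply, id_eq]
    rw [Real.norm_eq_abs, abs_of_nonneg (gaussianPDFReal_nonneg _ _ _)]
    unfold gaussianPDFReal
    have h1 : rexp (-(y - x - m2)^2/(2*(V2:ℝ))) ≤ 1 :=
      Real.exp_le_one_iff.mpr
        (div_nonpos_of_nonpos_of_nonneg (neg_nonpos.mpr (sq_nonneg _)) (by positivity))
    calc (√(2 * Real.pi * V2))⁻¹ * rexp (-(y - x - m2)^2/(2*(V2:ℝ)))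
        ≤ (√(2 * Real.pi * V2))⁻¹ * 1 := by gcongr
      _ = (√(2 * Real.pi * V2))⁻¹ := mul_one _
  calc ∫⁻ x, ENNReal.ofReal (gaussianPDFReal m1 V1 x)
          * ENNReal.ofReal (gaussianPDFReal (m2 + x) V2 y)
      = ∫⁻ x, ENNReal.ofReal (gaussianPDFReal m1 V1 x * gaussianPDFReal m2 V2 (y - x)) := by
        congr 1
        ext x
        rw [gaussianPDFReal_sub, ← ENNReal.ofReal_mul (gaussianPDFReal_nonneg _ _ _)]
    _ = ENNReal.ofReal (∫ x, gaussianPDFReal m1 V1 x * gaussianPDFReal m2 V2 (y - x)) := by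
        rw [← ofReal_integral_eq_lintegral_ofReal hint
          (ae_of_all _ fun x => mul_nonneg (gaussianPDFReal_nonneg _ _ _)
            (gaussianPDFReal_nonneg _ _ _))]
    _ = ENNReal.ofReal (gaussianPDFReal (m1 + m2) (V1 + V2) y) := by
        rw [gauss_pdf_conv _ _ _ _ hV1 hV2]

open Real in
private lemma gauss_pi_sum (v : ℝ≥0) : ∀ (n : ℕ) (c : Fin n → ℝ),
    Measure.map (fun x : Fin n → ℝ => ∑ i, c i * x i)
        (Measure.pi fun _ : Fin n => gaussianReal 0 v)
      = gaussianReal 0 (∑ i, (⟨(c i)^2, sq_nonneg _⟩ * v : ℝ≥0)) := by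
  intro n
  induction n with
  | zero =>
      intro c
      simp only [Finset.univ_eq_empty, Finset.sum_empty]
      rw [show (fun x : Fin 0 → ℝ => (0:ℝ)) = (fun _ => 0) from rfl]
      rw [Measure.map_const]
      simp [gaussianReal_zero_var]
  | succ n ih =>
      intro c
      have hmp := measurePreserving_piFinSuccAbove (fun _ : Fin (n+1) => gaussianReal 0 v) 0
      set e := MeasurableEquiv.piFinSuccAbove (fun _ : Fin (n+1) => ℝ) 0 with he
      have hpi : (Measure.pi fun _ : Fin (n+1) => gaussianReal 0 v)
          = Measure.map e.symm (((gaussianReal 0 v)).prod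
              (Measure.pi fun _ : Fin n => gaussianReal 0 v)) := by
        exact ((hmp.symm e).map_eq).symm
      rw [hpi, Measure.map_map (by fun_prop) (by fun_prop)]
      have hcomp : ((fun x : Fin (n+1) → ℝ => ∑ i, c i * x i) ∘ e.symm)
          = (fun p : ℝ × ℝ => p.1 + p.2) ∘
            (Prod.map (fun a : ℝ => c 0 * a)
              (fun z : Fin n → ℝ => ∑ j, c (Fin.succ j) * z j)) := by
        ext p
        simp only [Function.comp_apply, Prod.map_apply]
        rw [he]
        simp only [MeasurableEquiv.piFinSuccAbove_symm_apply]
        rw [Fin.sum_univ_succ]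
        simp [Fin.insertNthEquiv, Fin.zero_succAbove]
      rw [hcomp, ← Measure.map_map (by fun_prop) (by fun_prop),
        ← Measure.map_prod_map _ _ (by fun_prop) (by fun_prop),
        gaussianReal_map_const_mul, ih, gauss_map_add, mul_zero, add_zero]
      congr 1
      rw [Fin.sum_univ_succ]
      rfl

/-- Corollary 3.3 (Bounded reduction): under a Gaussian baseline `B ~ N(0, σ²I)`, a monotone
`L`-Lipschitz selection function, and `θ^AO = 𝓔𝓔ᵀθ*/‖𝓔𝓔ᵀθ*‖`, the probability that switching
from `θ*` to `θ^AO` reduces an agent's admission chance by more than `M` is bounded by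
`Φ((−M/L − λ)/(σ‖θ^AO − θ*‖))`. -/
theorem bounded_reduction
    (m d : ℕ) (σ L γ : ℝ) (hσ : 0 < σ) (hL : 0 < L) (hγ : 0 < γ)
    (E : Matrix (Fin m) (Fin d) ℝ)
    (θstar : EuclideanSpace ℝ (Fin m)) (hθstar : ‖θstar‖ ≤ 1)
    (hw : Matrix.toEuclideanLin (E * Eᵀ) θstar ≠ 0)
    (θAO : EuclideanSpace ℝ (Fin m))
    (hθAO : θAO = ‖Matrix.toEuclideanLin (E * Eᵀ) θstar‖⁻¹ •
        Matrix.toEuclideanLin (E * Eᵀ) θstar)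
    (hne : θAO ≠ θstar)
    (δ : ℝ → ℝ) (hmono : Monotone δ) (hlip : ∀ x y : ℝ, |δ x - δ y| ≤ L * |x - y|)
    (yhat : EuclideanSpace ℝ (Fin m) → EuclideanSpace ℝ (Fin m) → ℝ)
    (hyhat : ∀ θ b, yhat θ b = ⟪b + γ • Matrix.toEuclideanLin (E * Eᵀ) θ, θ⟫)
    (ξ : EuclideanSpace ℝ (Fin m) → EuclideanSpace ℝ (Fin m) → ℝ)
    (hξ : ∀ θ b, ξ θ b = δ (yhat θ b))
    (lam : ℝ)
    (hlam : lam = γ * (⟪θAO, Matrix.toEuclideanLin (E * Eᵀ) θAO⟫ -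
        ⟪θstar, Matrix.toEuclideanLin (E * Eᵀ) θstar⟫))
    (μ : Measure (EuclideanSpace ℝ (Fin m)))
    (hμ : μ = (Measure.pi fun _ : Fin m => gaussianReal 0 ⟨σ ^ 2, sq_nonneg σ⟩).map
        (MeasurableEquiv.toLp 2 (Fin m → ℝ))) :
    ∀ M : ℝ, 0 < M →
      μ {b | ξ θstar b - ξ θAO b > M} ≤
        ENNReal.ofReal ((cdf (gaussianReal 0 1)) ((-M / L - lam) / (σ * ‖θAO - θstar‖))) := by
  intro M hM
  set v : EuclideanSpace ℝ (Fin m) := θstar - θAO with hv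
  have hvne : v ≠ 0 := sub_ne_zero.mpr (Ne.symm hne)
  have hvnorm : ‖θAO - θstar‖ = ‖v‖ := norm_sub_rev _ _
  have hvpos : 0 < ‖v‖ := norm_pos_iff.mpr hvne
  set c : ℝ := M / L + lam with hc
  set s : ℝ := σ * ‖v‖ with hs
  have hspos : 0 < s := mul_pos hσ hvpos
  -- Step 1: event inclusion
  have hincl : {b | ξ θstar b - ξ θAO b > M} ⊆
      {b : EuclideanSpace ℝ (Fin m) | ⟪b, v⟫ > c} := by
    intro b hb
    simp only [Set.mem_setOf_eq, gt_iff_lt] at hb ⊢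
    rw [hξ, hξ] at hb
    have hy : yhat θstar b - yhat θAO b = ⟪b, v⟫ - lam := by
      rw [hyhat, hyhat, hlam, hv]
      simp only [inner_add_left, real_inner_smul_left, inner_sub_right]
      rw [real_inner_comm θAO (Matrix.toEuclideanLin (E * Eᵀ) θAO),
        real_inner_comm θstar (Matrix.toEuclideanLin (E * Eᵀ) θstar)]
      ring
    have hy12 : yhat θAO b < yhat θstar b := by
      by_contra h
      push_neg at h
      have := hmono h
      linarith
    have h2 : δ (yhat θstar b) - δ (yhat θAO b) ≤ L * (yhat θstar b - yhat θAO b) := by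
      calc δ (yhat θstar b) - δ (yhat θAO b) ≤ |δ (yhat θstar b) - δ (yhat θAO b)| :=
            le_abs_self _
        _ ≤ L * |yhat θstar b - yhat θAO b| := hlip _ _
        _ = L * (yhat θstar b - yhat θAO b) := by
            rw [abs_of_pos (sub_pos.mpr hy12)]
    have h3 : M < L * (⟪b, v⟫ - lam) := by rw [← hy]; linarith
    have h4 : M / L < ⟪b, v⟫ - lam := (div_lt_iff₀' hL).mpr h3
    rw [hc]
    linarith
  refine le_trans (measure_mono hincl) ?_
  -- Step 2: pushforward to the pi measure
  have hcont : Continuous fun b : EuclideanSpace ℝ (Fin m) => ⟪b, v⟫ :=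
    Continuous.inner continuous_id continuous_const
  have hSm : MeasurableSet {b : EuclideanSpace ℝ (Fin m) | ⟪b, v⟫ > c} :=
    hcont.measurable measurableSet_Ioi
  rw [hμ, Measure.map_apply (MeasurableEquiv.measurable _) hSm]
  have hpre : (MeasurableEquiv.toLp 2 (Fin m → ℝ)) ⁻¹'
        {b : EuclideanSpace ℝ (Fin m) | ⟪b, v⟫ > c}
      = (fun x : Fin m → ℝ => ∑ i, v i * x i) ⁻¹' Set.Ioi c := by
    ext x
    simp only [Set.mem_preimage, Set.mem_setOf_eq, Set.mem_Ioi, gt_iff_lt,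
      MeasurableEquiv.toLp_apply, PiLp.inner_apply, RCLike.inner_apply,
      conj_trivial, PiLp.toLp_apply]
  rw [hpre, ← Measure.map_apply (by fun_prop) measurableSet_Ioi,
    gauss_pi_sum ⟨σ ^ 2, sq_nonneg σ⟩ m (fun i => v i)]
  -- Step 3: identify the variance
  have hVval : (∑ i, (⟨(v i)^2, sq_nonneg _⟩ * ⟨σ ^ 2, sq_nonneg σ⟩ : ℝ≥0))
      = (⟨s^2, sq_nonneg s⟩ * 1 : ℝ≥0) := by
    apply NNReal.coe_injective
    push_cast
    show ∑ i, (v i)^2 * σ^2 = s^2 * 1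
    rw [hs, mul_pow, mul_one]
    have hnorm2 : ‖v‖^2 = ∑ i, (v i)^2 := by
      rw [EuclideanSpace.norm_eq, Real.sq_sqrt (by positivity)]
      simp [Real.norm_eq_abs, sq_abs]
    rw [hnorm2, Finset.mul_sum]
    exact Finset.sum_congr rfl fun i _ => by ring
  have hstd : gaussianReal 0 (⟨s^2, sq_nonneg s⟩ * 1 : ℝ≥0)
      = Measure.map (fun x : ℝ => s * x) (gaussianReal 0 1) := by
    rw [gaussianReal_map_const_mul s, mul_zero]
    rfl
  rw [hVval, hstd, Measure.map_apply (by fun_prop) measurableSet_Ioi]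
  have hpre2 : (fun x : ℝ => s * x) ⁻¹' Set.Ioi c = Set.Ioi (c / s) := by
    ext x
    simp only [Set.mem_preimage, Set.mem_Ioi]
    rw [div_lt_iff₀ hspos, mul_comm]
  rw [hpre2]
  -- Step 4: symmetry and cdf
  have hone : ((⟨(-1:ℝ)^2, sq_nonneg _⟩ : ℝ≥0) * 1) = 1 := by
    apply NNReal.coe_injective; norm_num; rfl
  have hmapneg : Measure.map (fun x : ℝ => (-1 : ℝ) * x) (gaussianReal 0 1)
      = gaussianReal 0 1 := by
    rw [gaussianReal_map_const_mul, mul_zero]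
    exact congrArg _ hone
  have hflip : (gaussianReal 0 1) (Set.Ioi (c / s)) ≤ (gaussianReal 0 1) (Set.Iic (-(c / s))) := by
    conv_lhs => rw [← hmapneg]
    rw [Measure.map_apply (by fun_prop) measurableSet_Ioi]
    refine measure_mono fun x hx => ?_
    simp only [Set.mem_preimage, Set.mem_Ioi] at hx
    simp only [Set.mem_Iic]
    linarith
  refine le_trans hflip ?_
  rw [ofReal_cdf]
  have harg : (-M / L - lam) / (σ * ‖θAO - θstar‖) = -(c / s) := by
    rw [hvnorm, ← hs, hc]
    field_simp
    ring
  rw [harg]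
end

section
/- Let ν be a probability measure on ℝ^m × ℝ (the joint law of an agent's baseline B and unobserved noise O) with both coordinates integrable, let μ := the first marginal of ν, let 𝓔 ∈ ℝ^{m×d}, γ ≥ 0, and θ*, θ ∈ ℝ^m. Define s_θ(b) := μ{ b' : ⟨b', θ⟩ ≤ ⟨b, θ⟩ }, the covariate shift c(θ) := γ𝓔𝓔ᵀθ, and assume Z_θ := ∫ s_θ(b) dν(b,o) > 0 and Z_{kθ} > 0 for a given k > 0. Define the conditional means of outcome and covariates of selected agents: m_Y(θ) := Z_θ^{-1} ∫ (⟨b + c(θ), θ*⟩ + o) s_θ(b) dν(b,o) and m_X(θ) := Z_θ^{-1} ∫ (b + c(θ)) s_θ(b) dν(b,o). Then m_Y(kθ) − m_Y(θ) = ⟨ m_X(kθ) − m_X(θ), θ* ⟩. -/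
open scoped RealInnerProductSpace BigOperators
open Matrix MeasureTheory

/-- Theorem 3.5 (Local exogeneity): under ranking selection and the common covariate shift
`c(θ) = γ𝓔𝓔ᵀθ`, the mean-shift identity
`m_Y(kθ) − m_Y(θ) = ⟨m_X(kθ) − m_X(θ), θ*⟩` holds for any `k > 0`. -/
theorem local_exogeneity
    (m d : ℕ) (ν : Measure (EuclideanSpace ℝ (Fin m) × ℝ)) [IsProbabilityMeasure ν]
    (hB : Integrable (fun p => p.1) ν) (hO : Integrable (fun p => p.2) ν)
    (μ : Measure (EuclideanSpace ℝ (Fin m))) (hμ : μ = ν.map Prod.fst)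
    (E : Matrix (Fin m) (Fin d) ℝ) (γ : ℝ) (hγ : 0 ≤ γ)
    (θstar θ : EuclideanSpace ℝ (Fin m)) (k : ℝ) (hk : 0 < k)
    (s : EuclideanSpace ℝ (Fin m) → EuclideanSpace ℝ (Fin m) → ℝ)
    (hs : ∀ θ' b, s θ' b = (μ {b' | ⟪b', θ'⟫ ≤ ⟪b, θ'⟫}).toReal)
    (c : EuclideanSpace ℝ (Fin m) → EuclideanSpace ℝ (Fin m))
    (hc : ∀ θ', c θ' = γ • Matrix.toEuclideanLin (E * Eᵀ) θ')
    (Z : EuclideanSpace ℝ (Fin m) → ℝ)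
    (hZ : ∀ θ', Z θ' = ∫ p, s θ' p.1 ∂ν)
    (hZθ : 0 < Z θ) (hZkθ : 0 < Z (k • θ))
    (mY : EuclideanSpace ℝ (Fin m) → ℝ)
    (hmY : ∀ θ', mY θ' = (Z θ')⁻¹ * ∫ p, (⟪p.1 + c θ', θstar⟫ + p.2) * s θ' p.1 ∂ν)
    (mX : EuclideanSpace ℝ (Fin m) → EuclideanSpace ℝ (Fin m))
    (hmX : ∀ θ', mX θ' = (Z θ')⁻¹ • ∫ p, s θ' p.1 • (p.1 + c θ') ∂ν) :
    mY (k • θ) - mY θ = ⟪mX (k • θ) - mX θ, θstar⟫ := by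
  have hμprob : IsProbabilityMeasure μ := by
    rw [hμ]; exact Measure.isProbabilityMeasure_map measurable_fst.aemeasurable
  -- basic properties of s
  have hs_nonneg : ∀ θ' b, 0 ≤ s θ' b := fun θ' b => by
    rw [hs]; exact ENNReal.toReal_nonneg
  have hs_le : ∀ θ' b, s θ' b ≤ 1 := fun θ' b => by
    rw [hs]
    calc (μ {b' | ⟪b', θ'⟫ ≤ ⟪b, θ'⟫}).toReal
        ≤ (1 : ENNReal).toReal := ENNReal.toReal_mono ENNReal.one_ne_top prob_le_one
      _ = 1 := by simp
  have hsmeas : ∀ θ' : EuclideanSpace ℝ (Fin m), Measurable (s θ') := by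
    intro θ'
    have h1 : Monotone (fun t : ℝ => (μ {b' | ⟪b', θ'⟫ ≤ t}).toReal) := by
      intro t t' htt
      exact ENNReal.toReal_mono (measure_ne_top μ _)
        (measure_mono fun b' hb' => le_trans hb' htt)
    have h2 : Measurable fun b : EuclideanSpace ℝ (Fin m) => (⟪b, θ'⟫ : ℝ) :=
      (continuous_id.inner continuous_const).measurable
    have heq : s θ' = (fun t : ℝ => (μ {b' | ⟪b', θ'⟫ ≤ t}).toReal) ∘
        fun b => (⟪b, θ'⟫ : ℝ) := by
      funext b; rw [hs]; rfl
    rw [heq]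
    exact h1.measurable.comp h2
  -- s is invariant under positive scaling of θ
  have s_eq : s (k • θ) = s θ := by
    funext b
    rw [hs, hs]
    congr 2
    ext b'
    simp only [Set.mem_setOf_eq, real_inner_smul_right]
    exact mul_le_mul_iff_right₀ hk
  have hZeq : Z (k • θ) = Z θ := by
    rw [hZ, hZ, s_eq]
  -- key decomposition of mY
  have key : ∀ θ' : EuclideanSpace ℝ (Fin m), 0 < Z θ' →
      mY θ' = ⟪mX θ', θstar⟫ + (Z θ')⁻¹ * ∫ p, p.2 * s θ' p.1 ∂ν := by
    intro θ' hZ'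
    have hmeas := hsmeas θ'
    have hsm : AEStronglyMeasurable (fun p : EuclideanSpace ℝ (Fin m) × ℝ => s θ' p.1) ν :=
      (hmeas.comp measurable_fst).aestronglyMeasurable
    have hbound : ∃ C, ∀ p : EuclideanSpace ℝ (Fin m) × ℝ, ‖s θ' p.1‖ ≤ C :=
      ⟨1, fun p => by
        rw [Real.norm_eq_abs, abs_of_nonneg (hs_nonneg _ _)]; exact hs_le _ _⟩
    have I2' : Integrable (fun p : EuclideanSpace ℝ (Fin m) × ℝ => s θ' p.1 * p.2) ν :=
      hO.bdd_mul hsm (Filter.Eventually.of_forall hbound.choose_spec)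
    have I2 : Integrable (fun p : EuclideanSpace ℝ (Fin m) × ℝ => p.2 * s θ' p.1) ν := by
      simpa only [mul_comm] using I2'
    have hA : Integrable (fun p : EuclideanSpace ℝ (Fin m) × ℝ =>
        (⟪p.1 + c θ', θstar⟫ : ℝ)) ν := by
      have h1 : Integrable (fun p : EuclideanSpace ℝ (Fin m) × ℝ => (⟪p.1, θstar⟫ : ℝ)) ν := by
        exact ((innerSL ℝ θstar).integrable_comp hB).congr
          (Filter.Eventually.of_forall fun p => real_inner_comm p.1 θstar)
      have := h1.add (integrable_const (⟪c θ', θstar⟫ : ℝ))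
      simpa [inner_add_left] using this
    have I3' : Integrable (fun p : EuclideanSpace ℝ (Fin m) × ℝ =>
        s θ' p.1 * ⟪p.1 + c θ', θstar⟫) ν := hA.bdd_mul hsm (Filter.Eventually.of_forall hbound.choose_spec)
    have I3 : Integrable (fun p : EuclideanSpace ℝ (Fin m) × ℝ =>
        (⟪p.1 + c θ', θstar⟫ : ℝ) * s θ' p.1) ν := by
      simpa only [mul_comm] using I3'
    have hvm : AEStronglyMeasurable
        (fun p : EuclideanSpace ℝ (Fin m) × ℝ => s θ' p.1 • (p.1 + c θ')) ν :=
      hsm.smul ((measurable_fst.add_const (c θ')).aestronglyMeasurable)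
    have I4 : Integrable
        (fun p : EuclideanSpace ℝ (Fin m) × ℝ => s θ' p.1 • (p.1 + c θ')) ν := by
      apply Integrable.mono' (hB.norm.add (integrable_const ‖c θ'‖)) hvm
      filter_upwards with p
      rw [norm_smul]
      calc ‖s θ' p.1‖ * ‖p.1 + c θ'‖
          ≤ 1 * ‖p.1 + c θ'‖ := by
            apply mul_le_mul_of_nonneg_right _ (norm_nonneg _)
            rw [Real.norm_eq_abs, abs_of_nonneg (hs_nonneg _ _)]; exact hs_le _ _
        _ = ‖p.1 + c θ'‖ := one_mul _
        _ ≤ ‖p.1‖ + ‖c θ'‖ := norm_add_le _ _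
    have hint : ∫ p, ((⟪p.1 + c θ', θstar⟫ : ℝ) + p.2) * s θ' p.1 ∂ν
        = ⟪∫ p, s θ' p.1 • (p.1 + c θ') ∂ν, θstar⟫ + ∫ p, p.2 * s θ' p.1 ∂ν := by
      have h1 : (fun p : EuclideanSpace ℝ (Fin m) × ℝ =>
          ((⟪p.1 + c θ', θstar⟫ : ℝ) + p.2) * s θ' p.1)
          = fun p => (⟪p.1 + c θ', θstar⟫ : ℝ) * s θ' p.1 + p.2 * s θ' p.1 := by
        funext p; ring
      rw [h1, integral_add I3 I2]
      congr 1
      calc ∫ p, (⟪p.1 + c θ', θstar⟫ : ℝ) * s θ' p.1 ∂ν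
          = ∫ p, (⟪θstar, s θ' p.1 • (p.1 + c θ')⟫ : ℝ) ∂ν := by
            congr 1; funext p
            rw [real_inner_smul_right, real_inner_comm, mul_comm]
        _ = ⟪θstar, ∫ p, s θ' p.1 • (p.1 + c θ') ∂ν⟫ := integral_inner I4 θstar
        _ = ⟪∫ p, s θ' p.1 • (p.1 + c θ') ∂ν, θstar⟫ := real_inner_comm _ _
    rw [hmY, hmX, hint, real_inner_smul_left]
    ring
  rw [key (k • θ) hZkθ, key θ hZθ, s_eq, hZeq, inner_sub_left]
  ring
end

section
/- Fix a decision maker i among n, let 𝓔 ∈ ℝ^{m×d}, θ*_i ∈ ℝ^m with 𝓔𝓔ᵀθ*_i ≠ 0, γ_i > 0, k_i > 0, and suppose α_i = (k_i − γ_i)𝓔𝓔ᵀθ*_i. With Q_i(θ_i, θ^{−i}) := ⟨α_i, θ_i⟩ + β_i + h_i(θ^{−i}) + c_i + ⟨γ_i θ_i + Σ_{j≠i} γ_j θ_j, 𝓔𝓔ᵀθ*_i⟩ and cPI_i(θ_i, θ^{−i}) := ⟨γ_i θ_i + Σ_{j≠i} γ_j θ_j, 𝓔𝓔ᵀθ*_i⟩,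 the parameter θ^{AO}_i := (α_i + γ_i𝓔𝓔ᵀθ*_i)/‖α_i + γ_i𝓔𝓔ᵀθ*_i‖₂ equals 𝓔𝓔ᵀθ*_i/‖𝓔𝓔ᵀθ*_i‖₂, and for every value of θ^{−i} and every θ_i with ‖θ_i‖₂ ≤ 1, both Q_i(θ_i, θ^{−i}) ≤ Q_i(θ^{AO}_i, θ^{−i}) and cPI_i(θ_i, θ^{−i}) ≤ cPI_i(θ^{AO}_i, θ^{−i}). -/
open scoped RealInnerProductSpace BigOperators
open Matrix

/-- Corollary 3.8 (Maximum improvement, extended): if `α_i = (k_i − γ_i)𝓔𝓔ᵀθ*_i` with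
`k_i, γ_i > 0`, then `θ^AO_i = 𝓔𝓔ᵀθ*_i/‖𝓔𝓔ᵀθ*_i‖` maximises both `Q_i` and `cPI_i` over the
unit ball, regardless of the rivals' parameters. -/
theorem max_improvement_extended
    (m d n : ℕ) (i : Fin n)
    (E : Matrix (Fin m) (Fin d) ℝ)
    (θstari : EuclideanSpace ℝ (Fin m))
    (hw : Matrix.toEuclideanLin (E * Eᵀ) θstari ≠ 0)
    (γ : Fin n → ℝ) (hγ : ∀ j, 0 ≤ γ j)
    (ki βi ci : ℝ) (hγi : 0 < γ i) (hki : 0 < ki)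
    (αi : EuclideanSpace ℝ (Fin m))
    (hαi : αi = (ki - γ i) • Matrix.toEuclideanLin (E * Eᵀ) θstari)
    (h : ({j : Fin n // j ≠ i} → EuclideanSpace ℝ (Fin m)) → ℝ)
    (Q cPI : EuclideanSpace ℝ (Fin m) → ({j : Fin n // j ≠ i} → EuclideanSpace ℝ (Fin m)) → ℝ)
    (hQ : ∀ θi θrest, Q θi θrest =
      ⟪αi, θi⟫ + βi + h θrest + ci +
        ⟪γ i • θi + ∑ j : {j : Fin n // j ≠ i}, γ j.1 • θrest j,
          Matrix.toEuclideanLin (E * Eᵀ) θstari⟫)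
    (hcPI : ∀ θi θrest, cPI θi θrest =
      ⟪γ i • θi + ∑ j : {j : Fin n // j ≠ i}, γ j.1 • θrest j,
        Matrix.toEuclideanLin (E * Eᵀ) θstari⟫)
    (θAO : EuclideanSpace ℝ (Fin m))
    (hθAO : θAO = ‖αi + γ i • Matrix.toEuclideanLin (E * Eᵀ) θstari‖⁻¹ •
        (αi + γ i • Matrix.toEuclideanLin (E * Eᵀ) θstari)) :
    θAO = ‖Matrix.toEuclideanLin (E * Eᵀ) θstari‖⁻¹ • Matrix.toEuclideanLin (E * Eᵀ) θstari ∧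
      ∀ θrest, ∀ θi : EuclideanSpace ℝ (Fin m), ‖θi‖ ≤ 1 →
        Q θi θrest ≤ Q θAO θrest ∧ cPI θi θrest ≤ cPI θAO θrest := by

  set w := Matrix.toEuclideanLin (E * Eᵀ) θstari with hwdef
  have hcomb : αi + γ i • w = ki • w := by
    rw [hαi, ← add_smul]; ring_nf
  have hθAO' : θAO = ‖w‖⁻¹ • w := by
    rw [hθAO, hcomb, norm_smul, Real.norm_eq_abs, abs_of_pos hki, mul_inv, smul_smul]
    have hwn : (0:ℝ) < ‖w‖ := norm_pos_iff.mpr hw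
    congr 1; field_simp
  have hwn : (0:ℝ) < ‖w‖ := norm_pos_iff.mpr hw
  have hAOw : ⟪θAO, w⟫ = ‖w‖ := by
    rw [hθAO', real_inner_smul_left, real_inner_self_eq_norm_sq]
    field_simp
  have key : ∀ θi : EuclideanSpace ℝ (Fin m), ‖θi‖ ≤ 1 → ⟪θi, w⟫ ≤ ⟪θAO, w⟫ := by
    intro θi hθi
    rw [hAOw]
    calc ⟪θi, w⟫ ≤ ‖θi‖ * ‖w‖ := real_inner_le_norm _ _
      _ ≤ 1 * ‖w‖ := by nlinarith
      _ = ‖w‖ := one_mul _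
  refine ⟨hθAO', fun θrest θi hθi => ?_⟩
  have hk := key θi hθi
  constructor
  · rw [hQ, hQ, hαi]
    simp only [inner_add_left, real_inner_smul_left]
    have h1 : ⟪w, θi⟫ = ⟪θi, w⟫ := real_inner_comm _ _
    have h2 : ⟪w, θAO⟫ = ⟪θAO, w⟫ := real_inner_comm _ _
    rw [h1, h2]
    nlinarith
  · rw [hcPI, hcPI]
    simp only [inner_add_left, real_inner_smul_left]
    nlinarith [hγi, hk]
end

section
/- Let σ > 0, L > 0, 𝓔 ∈ ℝ^{m×d}, γ_1, …, γ_n ≥ 0, and θ*_1, …, θ*_n ∈ ℝ^m with 𝓔𝓔ᵀθ*_j ≠ 0 for all j; set θ^{AO}_j := 𝓔𝓔ᵀθ*_j/‖𝓔𝓔ᵀθ*_j‖₂. Fix an index i and assume: (1) ‖θ*_i‖₂ ≤ 1; (2) ⟨θ*_j, 𝓔𝓔ᵀ(θ^{AO}_i − θ*_i)⟩ ≥ 0 for every j ≠ i; (3) θ^{AO}_i ≠ θ*_i. Fix rivals' parameters θ_j ∈ {θ*_j, θ^{AO}_j} for j ≠ i, write θ^{all}_• for the profile with θ_i = θ*_i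 and θ^{all}_⋄ for the profile with θ_i = θ^{AO}_i, define the best response a(θ^{all}) := 𝓔ᵀΣ_{j=1}^n γ_j θ_j, the prediction ŷ_i(θ^{all}; b) := ⟨b + 𝓔 a(θ^{all}), θ_i⟩, the admission chance ξ_i(θ^{all}; b) := δ̃_i(ŷ_i(θ^{all}; b)) for a monotone nondecreasing L-Lipschitz function δ̃_i : ℝ → ℝ, and λ := ⟨a(θ^{all}_⋄), 𝓔ᵀθ^{AO}_i⟩ − ⟨a(θ^{all}_•), 𝓔ᵀθ*_i⟩. Let μ be the product probability measure on ℝ^m whose coordinates are i.i.d. real Gaussian N(0, σ²). Then for every M > 0, μ{ b ∈ ℝ^m : ξ_i(θ^{all}_•; b) − ξ_i(θ^{all}_⋄; b) > M } ≤ Φ( (−M/L − λ) / (σ‖θ^{AO}_i − θ*_i‖₂) ), where Φ is the cumulative distribution function of the standard real Gaussian measure N(0,1). -/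
open scoped RealInnerProductSpace BigOperators ENNReal
open Matrix MeasureTheory ProbabilityTheory

open scoped NNReal
open Real Set

namespace BRE

noncomputable def nn (x : ℝ) : ℝ≥0 := ⟨x ^ 2, sq_nonneg x⟩

lemma var_eq {k : ℕ} (σc c : ℝ) (q : Fin k → ℝ) (h : c ^ 2 = σc ^ 2 * ∑ j, q j ^ 2) :
    nn c * 1 = (∑ j, nn (q j)) * nn σc := by
  rw [← NNReal.coe_inj, NNReal.coe_mul, NNReal.coe_mul, NNReal.coe_sum, NNReal.coe_one]
  simp only [nn, NNReal.coe_mk]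
  show c ^ 2 * 1 = (∑ i, q i ^ 2) * σc ^ 2; rw [h]; ring

lemma euclidean_adjoint {m d : ℕ} (E : Matrix (Fin m) (Fin d) ℝ)
    (x : EuclideanSpace ℝ (Fin d)) (y : EuclideanSpace ℝ (Fin m)) :
    ⟪Matrix.toEuclideanLin E x, y⟫ = ⟪x, Matrix.toEuclideanLin Eᵀ y⟫ := by
  rw [← Matrix.conjTranspose_eq_transpose_of_trivial,
    Matrix.toEuclideanLin_conjTranspose_eq_adjoint, LinearMap.adjoint_inner_right]


lemma map_add_prod_withDensity (f1 f2 : ℝ → ℝ≥0∞) (h1 : Measurable f1) (h2 : Measurable f2) :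
    ((volume.withDensity f1).prod (volume.withDensity f2)).map (fun p : ℝ × ℝ => p.1 + p.2)
      = volume.withDensity (fun z => ∫⁻ x, f1 x * f2 (z - x)) := by
  ext s hs
  rw [Measure.map_apply measurable_add hs,
    Measure.prod_apply (measurable_add hs)]
  have key : ∀ x : ℝ, (volume.withDensity f2) (Prod.mk x ⁻¹' ((fun p : ℝ × ℝ => p.1 + p.2) ⁻¹' s))
      = ∫⁻ z, s.indicator (fun z => f2 (z - x)) z := by
    intro x
    have : Prod.mk x ⁻¹' ((fun p : ℝ × ℝ => p.1 + p.2) ⁻¹' s) = (fun y => x + y) ⁻¹' s := rfl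
    rw [this, withDensity_apply _ (measurable_const_add x hs),
      ← lintegral_indicator (measurable_const_add x hs) f2]
    have heq : ∀ y : ℝ, ((fun y => x + y) ⁻¹' s).indicator f2 y
        = s.indicator (fun z => f2 (z - x)) (x + y) := by
      intro y
      by_cases hy : x + y ∈ s
      · rw [Set.indicator_of_mem hy, Set.indicator_of_mem (by exact hy), add_sub_cancel_left]
      · rw [Set.indicator_of_notMem hy, Set.indicator_of_notMem (by exact hy)]
    simp_rw [heq]
    exact (measurePreserving_add_left volume x).lintegral_comp
      ((h2.comp (measurable_id.sub_const x)).indicator hs)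
  simp_rw [key]
  rw [lintegral_withDensity_eq_lintegral_mul volume h1]
  swap
  · exact Measurable.lintegral_prod_right
      ((h2.comp (measurable_snd.sub measurable_fst)).indicator (measurable_snd hs))
  · have step1 : ∀ x : ℝ, (f1 * fun x => ∫⁻ z, s.indicator (fun z => f2 (z - x)) z) x
        = ∫⁻ z, s.indicator (fun z => f1 x * f2 (z - x)) z := by
      intro x
      simp only [Pi.mul_apply]
      have hm : Measurable fun z : ℝ => s.indicator (fun z => f2 (z - x)) z :=
        ((h2.comp (measurable_id.sub_const x)).indicator hs)
      rw [← lintegral_const_mul (f1 x) hm]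
      congr 1 with z
      by_cases hz : z ∈ s <;> simp [hz]
    simp_rw [step1]
    rw [lintegral_lintegral_swap]
    · rw [withDensity_apply _ hs, ← lintegral_indicator hs]
      congr 1 with z
      by_cases hz : z ∈ s
      · simp only [Set.indicator_of_mem hz]
      · simp [Set.indicator_of_notMem hz]
    · apply Measurable.aemeasurable
      apply Measurable.indicator
      · exact (h1.comp measurable_fst).mul (h2.comp (measurable_snd.sub measurable_fst))
      · exact measurable_snd hs


lemma pdf_conv_pointwise {v1 v2 : ℝ≥0} (hv1 : v1 ≠ 0) (hv2 : v2 ≠ 0) (z x : ℝ) :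
    gaussianPDFReal 0 v1 x * gaussianPDFReal 0 v2 (z - x)
      = gaussianPDFReal 0 (v1 + v2) z * gaussianPDFReal (v1 * z / (v1 + v2))
          (v1 * v2 / (v1 + v2)) x := by
  have h1 : (0 : ℝ) < v1 := lt_of_le_of_ne v1.coe_nonneg (by exact_mod_cast (Ne.symm hv1))
  have h2 : (0 : ℝ) < v2 := lt_of_le_of_ne v2.coe_nonneg (by exact_mod_cast (Ne.symm hv2))
  have hs : (0 : ℝ) < (v1 : ℝ) + v2 := by linarith
  simp only [gaussianPDFReal, NNReal.coe_add, NNReal.coe_div, NNReal.coe_mul]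
  rw [mul_mul_mul_comm, mul_mul_mul_comm (√(2 * π * ((v1:ℝ) + v2)))⁻¹]
  congr 1
  · rw [← mul_inv, ← mul_inv, ← Real.sqrt_mul (by positivity), ← Real.sqrt_mul (by positivity)]
    congr 1
    field_simp
  · rw [← Real.exp_add, ← Real.exp_add]
    congr 1
    field_simp
    ring

lemma gaussianPDF_conv {v1 v2 : ℝ≥0} (hv1 : v1 ≠ 0) (hv2 : v2 ≠ 0) (z : ℝ) :
    ∫⁻ x, gaussianPDF 0 v1 x * gaussianPDF 0 v2 (z - x) = gaussianPDF 0 (v1 + v2) z := by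
  have hs : v1 + v2 ≠ 0 := by
    simp only [ne_eq, add_eq_zero, not_and]
    exact fun h => absurd h hv1
  have hw : v1 * v2 / (v1 + v2) ≠ 0 := by
    simp [div_eq_zero_iff, mul_eq_zero, hv1, hv2, hs]
  calc ∫⁻ x, gaussianPDF 0 v1 x * gaussianPDF 0 v2 (z - x)
      = ∫⁻ x, ENNReal.ofReal (gaussianPDFReal 0 (v1 + v2) z)
          * ENNReal.ofReal (gaussianPDFReal (v1 * z / (v1 + v2)) (v1 * v2 / (v1 + v2)) x) := by
        congr 1 with x
        rw [gaussianPDF, gaussianPDF, ← ENNReal.ofReal_mul (gaussianPDFReal_nonneg _ _ _),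
          pdf_conv_pointwise hv1 hv2 z x,
          ENNReal.ofReal_mul (gaussianPDFReal_nonneg _ _ _)]
    _ = gaussianPDF 0 (v1 + v2) z := by
        rw [lintegral_const_mul _ (measurable_gaussianPDFReal _ _).ennreal_ofReal]
        rw [lintegral_gaussianPDFReal_eq_one _ hw, mul_one]
        rfl

lemma gaussianReal_conv (v1 v2 : ℝ≥0) :
    ((gaussianReal 0 v1).prod (gaussianReal 0 v2)).map (fun p : ℝ × ℝ => p.1 + p.2)
      = gaussianReal 0 (v1 + v2) := by
  by_cases hv1 : v1 = 0
  · subst hv1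
    rw [gaussianReal_zero_var, Measure.dirac_prod, zero_add,
      Measure.map_map measurable_add (measurable_prodMk_left)]
    have : ((fun p : ℝ × ℝ => p.1 + p.2) ∘ fun y : ℝ => ((0 : ℝ), y)) = id := by
      funext y; simp
    rw [this, Measure.map_id]
  by_cases hv2 : v2 = 0
  · subst hv2
    rw [gaussianReal_zero_var, Measure.prod_dirac, add_zero,
      Measure.map_map measurable_add (measurable_prodMk_right)]
    have : ((fun p : ℝ × ℝ => p.1 + p.2) ∘ fun x : ℝ => (x, (0 : ℝ))) = id := by
      funext y; simp
    rw [this, Measure.map_id]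
  have hs : v1 + v2 ≠ 0 := by
    simp only [ne_eq, add_eq_zero, not_and]
    exact fun h => absurd h hv1
  rw [gaussianReal_of_var_ne_zero _ hv1, gaussianReal_of_var_ne_zero _ hv2,
    gaussianReal_of_var_ne_zero _ hs,
    map_add_prod_withDensity _ _ (measurable_gaussianPDF _ _) (measurable_gaussianPDF _ _)]
  congr 1
  funext z
  exact gaussianPDF_conv hv1 hv2 z



lemma weighted_prod_map (v u : ℝ≥0) (c : ℝ) {α : Type*} [MeasurableSpace α]
    (Q : Measure α) [SigmaFinite Q] (g : α → ℝ) (hg : Measurable g)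
    (hQ : Q.map g = gaussianReal 0 u) :
    ((gaussianReal 0 v).prod Q).map (fun p : ℝ × α => c * p.1 + g p.2)
      = gaussianReal 0 (nn c * v + u) := by
  have hfun : (fun p : ℝ × α => c * p.1 + g p.2)
      = (fun q : ℝ × ℝ => q.1 + q.2) ∘ (Prod.map (fun x => c * x) g) := rfl
  rw [hfun, ← Measure.map_map measurable_add ((measurable_const_mul c).prodMap hg),
    ← Measure.map_prod_map _ _ (measurable_const_mul c) hg, hQ,
    gaussianReal_map_const_mul c, mul_zero, gaussianReal_conv]
  rfl

lemma pi_gauss_map (v : ℝ≥0) : ∀ (k : ℕ) (w : Fin k → ℝ),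
    (Measure.pi fun _ : Fin k => gaussianReal 0 v).map (fun x => ∑ i, w i * x i)
      = gaussianReal 0 ((∑ i, nn (w i)) * v) := by
  intro k
  induction k with
  | zero =>
    intro w
    simp only [Finset.univ_eq_empty, Finset.sum_empty, zero_mul, gaussianReal_zero_var]
    rw [Measure.map_const, measure_univ, one_smul]
  | succ k ih =>
    intro w
    have hmp := measurePreserving_piFinSuccAbove (fun _ : Fin (k + 1) => gaussianReal 0 v) 0
    set e := MeasurableEquiv.piFinSuccAbove (fun _ : Fin (k + 1) => ℝ) 0 with he
    have hcomp : (fun x : Fin (k+1) → ℝ => ∑ i, w i * x i)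
        = (fun p : ℝ × (Fin k → ℝ) => w 0 * p.1 + ∑ i, w (Fin.succ i) * p.2 i) ∘ e := by
      funext x
      simp only [Function.comp_apply, he, MeasurableEquiv.piFinSuccAbove]
      rw [Fin.sum_univ_succ]
      congr 1
    rw [hcomp, ← Measure.map_map (by fun_prop) e.measurable, hmp.map_eq]
    have := weighted_prod_map v ((∑ i : Fin k, nn (w (Fin.succ i))) * v)
      (w 0) (Measure.pi fun _ : Fin k => gaussianReal 0 v)
      (fun y => ∑ i, w (Fin.succ i) * y i) (by fun_prop) (ih _)
    rw [this]
    congr 1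
    rw [Fin.sum_univ_succ, add_mul]

end BRE

/-- Corollary 3.9 (Bounded reduction, extended): with a Gaussian baseline `B ~ N(0, σ²I)` and a
monotone `L`-Lipschitz selection function of decision maker `i`, the probability that switching
decision maker `i`'s parameter from `θ*_i` to `θ^AO_i` (rivals fixed) reduces an agent's
admission chance by more than `M` is bounded by `Φ((−M/L − λ)/(σ‖θ^AO_i − θ*_i‖))`. -/
theorem bounded_reduction_extended
    (m d n : ℕ) (i : Fin n) (σ L : ℝ) (hσ : 0 < σ) (hL : 0 < L)
    (E : Matrix (Fin m) (Fin d) ℝ)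
    (γ : Fin n → ℝ) (hγ : ∀ j, 0 ≤ γ j)
    (θstar θAO : Fin n → EuclideanSpace ℝ (Fin m))
    (hw : ∀ j, Matrix.toEuclideanLin (E * Eᵀ) (θstar j) ≠ 0)
    (hθAO : ∀ j, θAO j = ‖Matrix.toEuclideanLin (E * Eᵀ) (θstar j)‖⁻¹ •
        Matrix.toEuclideanLin (E * Eᵀ) (θstar j))
    (h1 : ‖θstar i‖ ≤ 1)
    (h2 : ∀ j, j ≠ i → 0 ≤ ⟪θstar j, Matrix.toEuclideanLin (E * Eᵀ) (θAO i - θstar i)⟫)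
    (h3 : θAO i ≠ θstar i)
    (θ : Fin n → EuclideanSpace ℝ (Fin m))
    (hθ : ∀ j, j ≠ i → θ j = θstar j ∨ θ j = θAO j)
    (θbul θdia : Fin n → EuclideanSpace ℝ (Fin m))
    (hbul : θbul = Function.update θ i (θstar i))
    (hdia : θdia = Function.update θ i (θAO i))
    (a : (Fin n → EuclideanSpace ℝ (Fin m)) → EuclideanSpace ℝ (Fin d))
    (ha : ∀ P, a P = Matrix.toEuclideanLin Eᵀ (∑ j, γ j • P j))
    (δ : ℝ → ℝ) (hmono : Monotone δ) (hlip : ∀ x y : ℝ, |δ x - δ y| ≤ L * |x - y|)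
    (yhat : (Fin n → EuclideanSpace ℝ (Fin m)) → EuclideanSpace ℝ (Fin m) → ℝ)
    (hyhat : ∀ P b, yhat P b = ⟪b + Matrix.toEuclideanLin E (a P), P i⟫)
    (ξ : (Fin n → EuclideanSpace ℝ (Fin m)) → EuclideanSpace ℝ (Fin m) → ℝ)
    (hξ : ∀ P b, ξ P b = δ (yhat P b))
    (lam : ℝ)
    (hlam : lam = ⟪a θdia, Matrix.toEuclideanLin Eᵀ (θAO i)⟫ -
        ⟪a θbul, Matrix.toEuclideanLin Eᵀ (θstar i)⟫)
    (μ : Measure (EuclideanSpace ℝ (Fin m)))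
    (hμ : μ = (Measure.pi fun _ : Fin m => gaussianReal 0 ⟨σ ^ 2, sq_nonneg σ⟩).map
        (MeasurableEquiv.toLp 2 (Fin m → ℝ))) :
    ∀ M : ℝ, 0 < M →
      μ {b | ξ θbul b - ξ θdia b > M} ≤
        ENNReal.ofReal ((cdf (gaussianReal 0 1))
          ((-M / L - lam) / (σ * ‖θAO i - θstar i‖))) := by
  intro M hM
  set w : EuclideanSpace ℝ (Fin m) := θstar i - θAO i with hwdef
  have hw0 : w ≠ 0 := sub_ne_zero.mpr (Ne.symm h3)
  have hnw : 0 < ‖w‖ := norm_pos_iff.mpr hw0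
  set c : ℝ := σ * ‖w‖ with hcdef
  have hc : 0 < c := mul_pos hσ hnw
  set t : ℝ := M / L + lam with htdef
  set f : EuclideanSpace ℝ (Fin m) → ℝ := fun b => ⟪b, w⟫ with hfdef
  have hfmeas : Measurable f := (continuous_id.inner continuous_const).measurable
  -- Step 1: event inclusion
  have hsub : {b | ξ θbul b - ξ θdia b > M} ⊆ {b | f b > t} := by
    intro b hb
    simp only [Set.mem_setOf_eq, hξ] at hb ⊢
    set y1 := yhat θbul b
    set y2 := yhat θdia b
    have hylt : y2 < y1 := by
      by_contra hle
      push_neg at hle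
      have := hmono hle
      linarith
    have hdiff : M < L * (y1 - y2) := by
      have h4 : δ y1 - δ y2 ≤ |δ y1 - δ y2| := le_abs_self _
      have h5 := hlip y1 y2
      rw [abs_of_pos (by linarith : (0:ℝ) < y1 - y2)] at h5
      linarith
    have hy12 : y1 - y2 = f b - lam := by
      have e1 : y1 = ⟪b, θstar i⟫ + ⟪a θbul, Matrix.toEuclideanLin Eᵀ (θstar i)⟫ := by
        simp only [y1, hyhat, hbul, Function.update_self]
        rw [inner_add_left, BRE.euclidean_adjoint]
      have e2 : y2 = ⟪b, θAO i⟫ + ⟪a θdia, Matrix.toEuclideanLin Eᵀ (θAO i)⟫ := by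
        simp only [y2, hyhat, hdia, Function.update_self]
        rw [inner_add_left, BRE.euclidean_adjoint]
      simp only [hfdef, hwdef, inner_sub_right]
      rw [e1, e2, hlam]
      ring
    have : M / L < y1 - y2 := by
      rw [div_lt_iff₀ hL]
      linarith [hdiff, mul_comm L (y1 - y2)]
    rw [hy12] at this
    simp only [htdef]
    linarith
  refine le_trans (measure_mono hsub) ?_
  -- Step 2: the law of f under μ
  set v : ℝ≥0 := ⟨σ ^ 2, sq_nonneg σ⟩ with hvdef
  have hmap : μ.map f = gaussianReal 0 ((∑ j, BRE.nn (w j)) * v) := by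
    rw [hμ, Measure.map_map hfmeas (MeasurableEquiv.measurable _)]
    have : (f ∘ (MeasurableEquiv.toLp 2 (Fin m → ℝ)))
        = fun x : Fin m → ℝ => ∑ j, w j * x j := by
      funext x
      simp only [Function.comp_apply, hfdef]
      rw [PiLp.inner_apply]
      refine Finset.sum_congr rfl fun j _ => ?_
      simp [MeasurableEquiv.toLp_apply, mul_comm]
    rw [this, BRE.pi_gauss_map]
  have hc2 : c ^ 2 = σ ^ 2 * ∑ j, w j ^ 2 := by
    have hnorm : ‖w‖ ^ 2 = ∑ j, w j ^ 2 := by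
      rw [EuclideanSpace.norm_eq, Real.sq_sqrt (by positivity)]
      refine Finset.sum_congr rfl fun j _ => ?_
      rw [Real.norm_eq_abs, sq_abs]
    rw [hcdef, mul_pow, hnorm]
  have hvar := BRE.var_eq σ c (fun j => w j) hc2
  have hmap2 : μ.map f = (gaussianReal 0 1).map (fun x => c * x) := by
    rw [hmap, gaussianReal_map_const_mul c, mul_zero]
    exact congrArg (gaussianReal 0) hvar.symm
  -- Step 3: compute the tail
  have hset : {b | f b > t} = f ⁻¹' (Set.Ioi t) := rfl
  rw [hset, ← Measure.map_apply hfmeas measurableSet_Ioi, hmap2,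
    Measure.map_apply (measurable_const_mul c) measurableSet_Ioi]
  have hpre : (fun x => c * x) ⁻¹' (Set.Ioi t) = Set.Ioi (t / c) := by
    ext x
    simp only [Set.mem_preimage, Set.mem_Ioi, div_lt_iff₀ hc, mul_comm]
  rw [hpre]
  have hneg : (gaussianReal 0 1).map (fun x => (-1 : ℝ) * x) = gaussianReal 0 1 := by
    rw [gaussianReal_map_const_mul, mul_zero]
    congr 1
    ext
    norm_num
  have hIoi : (gaussianReal 0 1) (Set.Ioi (t / c)) = (gaussianReal 0 1) (Set.Iio (-(t / c))) := by
    conv_lhs => rw [← hneg, Measure.map_apply (measurable_const_mul _) measurableSet_Ioi]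
    congr 1
    ext x
    simp only [Set.mem_preimage, Set.mem_Ioi, Set.mem_Iio]
    constructor <;> intro h <;> linarith
  rw [hIoi]
  refine le_trans (measure_mono Set.Iio_subset_Iic_self) ?_
  rw [ofReal_cdf]
  have harg : -(t / c) = (-M / L - lam) / (σ * ‖θAO i - θstar i‖) := by
    rw [show ‖θAO i - θstar i‖ = ‖w‖ by rw [hwdef, norm_sub_rev], htdef, hcdef]
    ring
  rw [harg]
end

section
/- Let ν be a probability measure on ℝ^m × ℝ (the joint law of an agent's baseline B and environment-i noise O_i) with both coordinates integrable, and let μ be its first marginal. Let 𝓔 ∈ ℝ^{m×d}, γ_1, …, γ_n ≥ 0, θ*_i ∈ ℝ^m, and for each profile θ^{all} = (θ_1, …, θ_n) ∈ (ℝ^m)^n define the per-decision-maker selection probabilities s_j(b; θ_j) := μ{ b' : ⟨b', θ_j⟩ ≤ ⟨b, θ_j⟩ }, the compliance weight p_i(b; θ^{all}) := Σ_{w ∈ {0,1}^n} q_i(w) Π_{j=1}^n ( s_j(b; θ_j) if w_j = 1 else 1 − s_j(b; θ_j) ), where q_i : {0,1}^n → [0,1] is a fixed function, and the covariate shift c(θ^{all})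 := 𝓔𝓔ᵀ Σ_{j=1}^n γ_j θ_j. With Z(θ^{all}) := ∫ p_i(b; θ^{all}) dν(b,o), assume Z(θ^{all}) > 0 and Z(θ'^{all}) > 0, where θ'_j = k_j θ_j with k_j > 0 for every j. Define m_Y(θ^{all}) := Z(θ^{all})^{-1} ∫ (⟨b + c(θ^{all}), θ*_i⟩ + o) p_i(b; θ^{all}) dν(b,o) and m_X(θ^{all}) := Z(θ^{all})^{-1} ∫ (b + c(θ^{all})) p_i(b; θ^{all}) dν(b,o). Then m_Y(θ'^{all}) − m_Y(θ^{all}) = ⟨ m_X(θ'^{all}) − m_X(θ^{all}), θ*_i ⟩. -/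
open scoped RealInnerProductSpace BigOperators
open Matrix MeasureTheory

/-- Theorem 3.11 (Local exogeneity, extended): when all decision makers follow the cooperative
protocol (`θ'_j = k_j θ_j`, `k_j > 0`), the mean-shift identity
`m_Y(θ') − m_Y(θ) = ⟨m_X(θ') − m_X(θ), θ*_i⟩` holds for the agents complying with DM `i`. -/
theorem local_exogeneity_extended
    (m d n : ℕ) (i : Fin n)
    (ν : Measure (EuclideanSpace ℝ (Fin m) × ℝ)) [IsProbabilityMeasure ν]
    (hB : Integrable (fun p => p.1) ν) (hO : Integrable (fun p => p.2) ν)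
    (μ : Measure (EuclideanSpace ℝ (Fin m))) (hμ : μ = ν.map Prod.fst)
    (E : Matrix (Fin m) (Fin d) ℝ)
    (γ : Fin n → ℝ) (hγ : ∀ j, 0 ≤ γ j)
    (θstari : EuclideanSpace ℝ (Fin m))
    (s : EuclideanSpace ℝ (Fin m) → EuclideanSpace ℝ (Fin m) → ℝ)
    (hs : ∀ θj b, s b θj = (μ {b' | ⟪b', θj⟫ ≤ ⟪b, θj⟫}).toReal)
    (q : (Fin n → Bool) → ℝ) (hq : ∀ w, 0 ≤ q w ∧ q w ≤ 1)
    (p : EuclideanSpace ℝ (Fin m) → (Fin n → EuclideanSpace ℝ (Fin m)) → ℝ)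
    (hp : ∀ b P, p b P = ∑ w : Fin n → Bool,
        q w * ∏ j, (if w j then s b (P j) else 1 - s b (P j)))
    (c : (Fin n → EuclideanSpace ℝ (Fin m)) → EuclideanSpace ℝ (Fin m))
    (hc : ∀ P, c P = Matrix.toEuclideanLin (E * Eᵀ) (∑ j, γ j • P j))
    (θ θ' : Fin n → EuclideanSpace ℝ (Fin m)) (k : Fin n → ℝ)
    (hk : ∀ j, 0 < k j) (hθ' : ∀ j, θ' j = k j • θ j)
    (Z : (Fin n → EuclideanSpace ℝ (Fin m)) → ℝ)
    (hZ : ∀ P, Z P = ∫ x, p x.1 P ∂ν)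
    (hZθ : 0 < Z θ) (hZθ' : 0 < Z θ')
    (mY : (Fin n → EuclideanSpace ℝ (Fin m)) → ℝ)
    (hmY : ∀ P, mY P = (Z P)⁻¹ * ∫ x, (⟪x.1 + c P, θstari⟫ + x.2) * p x.1 P ∂ν)
    (mX : (Fin n → EuclideanSpace ℝ (Fin m)) → EuclideanSpace ℝ (Fin m))
    (hmX : ∀ P, mX P = (Z P)⁻¹ • ∫ x, p x.1 P • (x.1 + c P) ∂ν) :
    mY θ' - mY θ = ⟪mX θ' - mX θ, θstari⟫ := by
  have hμprob : IsProbabilityMeasure μ := by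
    rw [hμ]; exact Measure.isProbabilityMeasure_map measurable_fst.aemeasurable
  -- s takes values in [0,1]
  have hs01 : ∀ θj b, 0 ≤ s b θj ∧ s b θj ≤ 1 := by
    intro θj b
    rw [hs]
    refine ⟨ENNReal.toReal_nonneg, ?_⟩
    calc (μ {b' | ⟪b', θj⟫ ≤ ⟪b, θj⟫}).toReal ≤ (1 : ENNReal).toReal :=
          ENNReal.toReal_mono ENNReal.one_ne_top prob_le_one
      _ = 1 := by simp
  -- scaling invariance of s
  have hs_eq : ∀ j b, s b (θ' j) = s b (θ j) := by
    intro j b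
    rw [hθ', hs, hs]
    congr 2
    ext b'
    simp only [Set.mem_setOf_eq, real_inner_smul_right]
    exact mul_le_mul_iff_right₀ (hk j)
  have hp_eq : ∀ b, p b θ' = p b θ := by
    intro b; simp only [hp, hs_eq]
  have hZ_eq : Z θ' = Z θ := by simp only [hZ, hp_eq]
  -- p nonneg and bounded
  have hp_nonneg : ∀ b, 0 ≤ p b θ := by
    intro b
    rw [hp]
    refine Finset.sum_nonneg fun w _ => mul_nonneg (hq w).1 (Finset.prod_nonneg fun j _ => ?_)
    rcases Bool.eq_false_or_eq_true (w j) with h | h <;>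
      rw [h] <;> simp only [Bool.false_eq_true, if_false, if_true]
    · exact (hs01 (θ j) b).1
    · linarith [(hs01 (θ j) b).2]
  have hp_le : ∀ b, p b θ ≤ (2 : ℝ) ^ n := by
    intro b
    rw [hp]
    calc ∑ w : Fin n → Bool, q w * ∏ j, (if w j then s b (θ j) else 1 - s b (θ j))
        ≤ ∑ _w : Fin n → Bool, (1 : ℝ) := by
          refine Finset.sum_le_sum fun w _ => ?_
          refine mul_le_one₀ (hq w).2 (Finset.prod_nonneg fun j _ => ?_)
            (Finset.prod_le_one (fun j _ => ?_) (fun j _ => ?_)) <;>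
            rcases Bool.eq_false_or_eq_true (w j) with h | h <;>
            rw [h] <;> simp only [Bool.false_eq_true, if_false, if_true]
          · exact (hs01 (θ j) b).1
          · linarith [(hs01 (θ j) b).2]
          · exact (hs01 (θ j) b).1
          · linarith [(hs01 (θ j) b).2]
          · exact (hs01 (θ j) b).2
          · linarith [(hs01 (θ j) b).1]
      _ = (2 : ℝ) ^ n := by
          simp [Finset.card_univ]
  -- measurability of s(·, θj)
  have hsmeas : ∀ θj, Measurable (fun b => s b θj) := by
    intro θj
    have hL : Measurable (fun b : EuclideanSpace ℝ (Fin m) => ⟪b, θj⟫) :=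
      (continuous_id.inner continuous_const).measurable
    have hF : Monotone (fun t : ℝ => (μ {b' | ⟪b', θj⟫ ≤ t}).toReal) := by
      intro t1 t2 h
      exact ENNReal.toReal_mono (measure_ne_top μ _)
        (measure_mono fun b' hb' => le_trans hb' h)
    have heq : (fun b => s b θj)
        = (fun t : ℝ => (μ {b' | ⟪b', θj⟫ ≤ t}).toReal) ∘ (fun b => ⟪b, θj⟫) := by
      funext b; simp [hs]
    rw [heq]
    exact hF.measurable.comp hL
  have hpmeas : Measurable (fun b => p b θ) := by
    simp only [hp]
    refine Finset.measurable_sum _ fun w _ => Measurable.const_mul ?_ _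
    refine Finset.measurable_prod _ fun j _ => ?_
    rcases Bool.eq_false_or_eq_true (w j) with h | h <;>
      rw [h] <;> simp only [Bool.false_eq_true, if_false, if_true]
    · exact hsmeas (θ j)
    · exact measurable_const.sub (hsmeas (θ j))
  have hpasm : AEStronglyMeasurable (fun x : EuclideanSpace ℝ (Fin m) × ℝ => p x.1 θ) ν :=
    (hpmeas.comp measurable_fst).aestronglyMeasurable
  have hpbound : ∀ x : EuclideanSpace ℝ (Fin m) × ℝ, ‖p x.1 θ‖ ≤ (2 : ℝ) ^ n := by
    intro x
    have h2 : (0 : ℝ) ≤ 2 ^ n := by positivity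
    rw [Real.norm_eq_abs, abs_le]
    exact ⟨by linarith [hp_nonneg x.1], hp_le x.1⟩
  have hpint : Integrable (fun x : EuclideanSpace ℝ (Fin m) × ℝ => p x.1 θ) ν := by
    refine (integrable_const ((2 : ℝ) ^ n)).mono' hpasm ?_
    filter_upwards with x using hpbound x
  -- integrability of the Y-integrand for θ
  have hB1 : Integrable (fun x : EuclideanSpace ℝ (Fin m) × ℝ =>
      ⟪x.1 + c θ, θstari⟫ + x.2) ν := by
    have h1 : Integrable (fun x : EuclideanSpace ℝ (Fin m) × ℝ => ⟪x.1, θstari⟫) ν := by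
      have h0 := (innerSL ℝ θstari).integrable_comp hB
      have heq : (fun x : EuclideanSpace ℝ (Fin m) × ℝ => ⟪x.1, θstari⟫)
          = fun x : EuclideanSpace ℝ (Fin m) × ℝ => (innerSL ℝ θstari) x.1 := by
        funext x; rw [innerSL_apply_apply, real_inner_comm]
      rw [heq]; exact h0
    have h2 := (h1.add (integrable_const ⟪c θ, θstari⟫)).add hO
    have heq : (fun x : EuclideanSpace ℝ (Fin m) × ℝ => ⟪x.1 + c θ, θstari⟫ + x.2)
        = fun x : EuclideanSpace ℝ (Fin m) × ℝ => ⟪x.1, θstari⟫ + ⟪c θ, θstari⟫ + x.2 := by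
      funext x; rw [inner_add_left]
    rw [heq]; exact h2
  have hgθ : Integrable (fun x : EuclideanSpace ℝ (Fin m) × ℝ =>
      (⟪x.1 + c θ, θstari⟫ + x.2) * p x.1 θ) ν := by
    have := hB1.bdd_mul hpasm (c := (2 : ℝ) ^ n) (Filter.Eventually.of_forall hpbound)
    simpa [mul_comm] using this
  have hGθ : Integrable (fun x : EuclideanSpace ℝ (Fin m) × ℝ =>
      p x.1 θ • (x.1 + c θ)) ν := by
    have hx : Integrable (fun x : EuclideanSpace ℝ (Fin m) × ℝ => x.1 + c θ) ν :=
      hB.add (integrable_const _)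
    exact hx.smul_of_top_right
      (memLp_top_of_bound hpasm _ (Filter.Eventually.of_forall hpbound))
  -- integral identities
  have hIY : ∫ x, (⟪x.1 + c θ', θstari⟫ + x.2) * p x.1 θ' ∂ν
      = (∫ x, (⟪x.1 + c θ, θstari⟫ + x.2) * p x.1 θ ∂ν)
        + ⟪c θ' - c θ, θstari⟫ * Z θ := by
    have pw : ∀ x : EuclideanSpace ℝ (Fin m) × ℝ,
        (⟪x.1 + c θ', θstari⟫ + x.2) * p x.1 θ'
        = (⟪x.1 + c θ, θstari⟫ + x.2) * p x.1 θ + ⟪c θ' - c θ, θstari⟫ * p x.1 θ := by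
      intro x
      rw [hp_eq]
      simp only [inner_add_left, inner_sub_left]
      ring
    simp only [pw]
    rw [integral_add hgθ (hpint.const_mul _), integral_const_mul, hZ]
  have hIX : ∫ x, p x.1 θ' • (x.1 + c θ') ∂ν
      = (∫ x, p x.1 θ • (x.1 + c θ) ∂ν) + Z θ • (c θ' - c θ) := by
    have pw : ∀ x : EuclideanSpace ℝ (Fin m) × ℝ,
        p x.1 θ' • (x.1 + c θ') = p x.1 θ • (x.1 + c θ) + p x.1 θ • (c θ' - c θ) := by
      intro x
      rw [hp_eq, ← smul_add]
      congr 1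
      abel
    simp only [pw]
    rw [integral_add hGθ (hpint.smul_const _), integral_smul_const, hZ]
  have hZne : Z θ ≠ 0 := ne_of_gt hZθ
  rw [hmY, hmY, hmX, hmX, hZ_eq, hIY, hIX, smul_add, smul_smul,
    inv_mul_cancel₀ hZne, one_smul, mul_add]
  have hK : (Z θ)⁻¹ * (⟪c θ' - c θ, θstari⟫ * Z θ) = ⟪c θ' - c θ, θstari⟫ := by
    field_simp
  rw [hK, add_sub_cancel_left, add_sub_cancel_left]
end
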